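/- arXiv:2512.24667 — 3 statements merged into one kernel-verified Lean document; each statement's English description precedes it below -/
import Mathlib

section
/- The total objective Φ has Lipschitz gradient: for all x1, x2 ∈ ℝ^{d1}, ‖∇Φ(x1) − ∇Φ(x2)‖ ≤ L_f ‖x1 − x2‖, where L_f = l_{f,1} + l_{g,1}(l_{f,1} + M_f)/μ_g + (l_{f,0}/μ_g)(l_{g,2} + l_{g,1}l_{g,2}/μ_g) and M_f = l_{f,1} + l_{g,1}l_{f,1}/μ_g + (l_{f,0}/μ_g)(l_{g,2} + l_{g,1}l_{g,2}/μ_g). -/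
/-!
Averaging over the clients preserves every assumption, so it suffices to treat one pair of
objectives `f, g`. Strong monotonicity of `∇_y g` makes `y*` Lipschitz with constant
`κ = l_{g,1}/μ_g` and makes `∇²_{yy} g` invertible with inverse of norm at most `1/μ_g`
(Lax–Milgram). Second-order Taylor bounds, which only need the partial derivatives to be Lipschitz,
show that `f` is jointly differentiable and that `y*` is differentiable with derivative
`-(∇²_{yy} g)⁻¹ ∇²_{yx} g`; the chain rule then gives
`∇Φ = ∇_x f - (∇²_{yx} g)ᵀ (∇²_{yy} g)⁻ᵀ ∇_y f` along `(x, y*(x))`. Each factor is bounded and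
Lipschitz in `x`, and expanding the difference of products gives
`L_f = (1 + κ)² (l_{f,1} + l_{f,0} l_{g,2}/μ_g)`.
-/

open scoped RealInnerProductSpace

noncomputable section

abbrev Vec (d : ℕ) := EuclideanSpace ℝ (Fin d)

open Asymptotics Filter

theorem sqrt_sq_add_sq_le_add {a b : ℝ} (ha : 0 ≤ a) (hb : 0 ≤ b) : √(a ^ 2 + b ^ 2) ≤ a + b :=
  (Real.sqrt_le_left (add_nonneg ha hb)).2 (by nlinarith [mul_nonneg ha hb])

theorem le_mul_add_of_sqrt_le {a b c d L : ℝ} (hL : 0 ≤ L) (hc : 0 ≤ c) (hd : 0 ≤ d)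
    (h : √(a ^ 2 + b ^ 2) ≤ L * √(c ^ 2 + d ^ 2)) : a ≤ L * (c + d) ∧ b ≤ L * (c + d) := by
  have hcd := h.trans (mul_le_mul_of_nonneg_left (sqrt_sq_add_sq_le_add hc hd) hL)
  exact ⟨(Real.le_sqrt_of_sq_le (le_add_of_nonneg_right (sq_nonneg b))).trans hcd,
    (Real.le_sqrt_of_sq_le (le_add_of_nonneg_left (sq_nonneg a))).trans hcd⟩

section Calculus

variable {E F G : Type*} [NormedAddCommGroup E] [NormedSpace ℝ E] [NormedAddCommGroup F]
  [NormedSpace ℝ F] [NormedAddCommGroup G] [NormedSpace ℝ G]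

theorem hasFDerivAt_of_norm_sub_sub_le_sq {f : E → G} {f' : E →L[ℝ] G} {x : E} {C : ℝ}
    (h : ∀ x', ‖f x' - f x - f' (x' - x)‖ ≤ C * ‖x' - x‖ ^ 2) : HasFDerivAt f f' x := by
  rw [hasFDerivAt_iff_isLittleO_nhds_zero]
  refine IsBigO.trans_isLittleO ?_ (isLittleO_norm_pow_id one_lt_two)
  refine IsBigO.of_bound C (Eventually.of_forall fun v => ?_)
  simpa using h (x + v)

theorem norm_sub_sub_le_of_lipschitz_fderiv {f : E → G} {f' : E → E →L[ℝ] G} {x : E} {L : ℝ}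
    (hL : 0 ≤ L) (hf : ∀ z, HasFDerivAt f (f' z) z) (hf' : ∀ z, ‖f' z - f' x‖ ≤ L * ‖z - x‖)
    (x' : E) : ‖f x' - f x - f' x (x' - x)‖ ≤ L * ‖x' - x‖ ^ 2 := by
  have := (convex_closedBall x ‖x' - x‖).norm_image_sub_le_of_norm_hasFDerivWithin_le'
    (fun z _ => (hf z).hasFDerivWithinAt)
    (fun z hz => (hf' z).trans (mul_le_mul_of_nonneg_left (mem_closedBall_iff_norm.1 hz) hL))
    (Metric.mem_closedBall_self (norm_nonneg _)) (mem_closedBall_iff_norm.2 le_rfl)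
  rwa [sq, ← mul_assoc]

theorem norm_sub_sub_sub_le_of_lipschitz_partials {φ : E → F → G} {A : E → F → E →L[ℝ] G}
    {B : E → F → F →L[ℝ] G} {L : ℝ} (hL : 0 ≤ L)
    (hA : ∀ x y, HasFDerivAt (φ · y) (A x y) x) (hB : ∀ x y, HasFDerivAt (φ x ·) (B x y) y)
    (hA_lip : ∀ x1 x2 y, ‖A x1 y - A x2 y‖ ≤ L * ‖x1 - x2‖)
    (hB_lip : ∀ x1 y1 x2 y2, ‖B x1 y1 - B x2 y2‖ ≤ L * (‖x1 - x2‖ + ‖y1 - y2‖))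
    (x x' : E) (y y' : F) :
    ‖φ x' y' - φ x y - A x y (x' - x) - B x y (y' - y)‖ ≤ L * (‖x' - x‖ + ‖y' - y‖) ^ 2 := by
  have hy := norm_sub_sub_le_of_lipschitz_fderiv hL (hB x')
    (fun z => by simpa using hB_lip x' z x' y) y'
  have hx := norm_sub_sub_le_of_lipschitz_fderiv hL (hA · y) (fun z => hA_lip z x y) x'
  have hcross : ‖(B x' y - B x y) (y' - y)‖ ≤ L * ‖x' - x‖ * ‖y' - y‖ :=
    (B x' y - B x y).le_of_opNorm_le (by simpa using hB_lip x' y x y) _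
  calc ‖φ x' y' - φ x y - A x y (x' - x) - B x y (y' - y)‖
      = ‖(φ x' y' - φ x' y - B x' y (y' - y)) + (φ x' y - φ x y - A x y (x' - x))
          + (B x' y - B x y) (y' - y)‖ := by congr 1; simp only [sub_apply]; abel
    _ ≤ L * ‖y' - y‖ ^ 2 + L * ‖x' - x‖ ^ 2 + L * ‖x' - x‖ * ‖y' - y‖ :=
      norm_add₃_le.trans (by gcongr)
    _ ≤ L * (‖x' - x‖ + ‖y' - y‖) ^ 2 := by
      nlinarith [mul_nonneg hL (mul_nonneg (norm_nonneg (x' - x)) (norm_nonneg (y' - y)))]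

theorem hasFDerivAt_uncurry_of_lipschitz_partials {φ : E → F → G} {A : E → F → E →L[ℝ] G}
    {B : E → F → F →L[ℝ] G} {L : ℝ} (hL : 0 ≤ L)
    (hA : ∀ x y, HasFDerivAt (φ · y) (A x y) x) (hB : ∀ x y, HasFDerivAt (φ x ·) (B x y) y)
    (hA_lip : ∀ x1 x2 y, ‖A x1 y - A x2 y‖ ≤ L * ‖x1 - x2‖)
    (hB_lip : ∀ x1 y1 x2 y2, ‖B x1 y1 - B x2 y2‖ ≤ L * (‖x1 - x2‖ + ‖y1 - y2‖)) (x : E) (y : F) :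
    HasFDerivAt (fun p : E × F => φ p.1 p.2) ((A x y).coprod (B x y)) (x, y) := by
  refine hasFDerivAt_of_norm_sub_sub_le_sq (C := 4 * L) fun p => ?_
  have h1 : ‖p.1 - x‖ ≤ ‖p - (x, y)‖ := norm_fst_le (p - (x, y))
  have h2 : ‖p.2 - y‖ ≤ ‖p - (x, y)‖ := norm_snd_le (p - (x, y))
  calc ‖φ p.1 p.2 - φ x y - (A x y).coprod (B x y) (p - (x, y))‖
      = ‖φ p.1 p.2 - φ x y - A x y (p.1 - x) - B x y (p.2 - y)‖ := by
        rw [ContinuousLinearMap.coprod_apply, Prod.fst_sub, Prod.snd_sub, ← sub_sub]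
    _ ≤ L * (‖p.1 - x‖ + ‖p.2 - y‖) ^ 2 :=
      norm_sub_sub_sub_le_of_lipschitz_partials hL hA hB hA_lip hB_lip x p.1 y p.2
    _ ≤ 4 * L * ‖p - (x, y)‖ ^ 2 := by
      have : ‖p.1 - x‖ + ‖p.2 - y‖ ≤ 2 * ‖p - (x, y)‖ := by linarith
      nlinarith [pow_le_pow_left₀ (by positivity) this 2]

theorem norm_comp_sub_comp_le (a1 a2 : F →L[ℝ] G) (b1 b2 : E →L[ℝ] F) :
    ‖a1 ∘L b1 - a2 ∘L b2‖ ≤ ‖a1 - a2‖ * ‖b1‖ + ‖a2‖ * ‖b1 - b2‖ := by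
  rw [show a1 ∘L b1 - a2 ∘L b2 = (a1 - a2) ∘L b1 + a2 ∘L (b1 - b2) by
    rw [ContinuousLinearMap.sub_comp, ContinuousLinearMap.comp_sub]; abel]
  exact (norm_add_le _ _).trans
    (add_le_add (ContinuousLinearMap.opNorm_comp_le _ _) (ContinuousLinearMap.opNorm_comp_le _ _))

theorem norm_inverse_sub_le {S1 S2 H1 H2 : F →L[ℝ] F} (h1 : S1 ∘L H1 = .id ℝ F)
    (h2 : H2 ∘L S2 = .id ℝ F) : ‖S1 - S2‖ ≤ ‖S1‖ * ‖H1 - H2‖ * ‖S2‖ := by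
  have : S1 - S2 = S1 ∘L (H2 - H1) ∘L S2 := by
    ext v
    have e1 := congr($h1 (S2 v))
    have e2 := congr($h2 v)
    simp only [ContinuousLinearMap.comp_apply, ContinuousLinearMap.id_apply] at e1 e2
    simp [e1, e2]
  rw [this, norm_sub_rev H1 H2]
  exact (ContinuousLinearMap.opNorm_comp_le _ _).trans
    (by rw [mul_assoc]; gcongr; exact ContinuousLinearMap.opNorm_comp_le _ _)

theorem norm_inverse_comp_sub_le {S1 S2 H1 H2 : F →L[ℝ] F} {D1 D2 : E →L[ℝ] F} {μ K L r : ℝ}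
    (hμ : 0 < μ) (h1 : S1 ∘L H1 = .id ℝ F) (h2 : H2 ∘L S2 = .id ℝ F)
    (hS1 : ‖S1‖ ≤ μ⁻¹) (hS2 : ‖S2‖ ≤ μ⁻¹) (hD1 : ‖D1‖ ≤ K)
    (hH : ‖H1 - H2‖ ≤ L * r) (hD : ‖D1 - D2‖ ≤ L * r) :
    ‖S1 ∘L D1 - S2 ∘L D2‖ ≤ (1 + K / μ) * L / μ * r := by
  have hLr : 0 ≤ L * r := (norm_nonneg _).trans hH
  have hS : ‖S1 - S2‖ ≤ μ⁻¹ * (L * r) * μ⁻¹ := (norm_inverse_sub_le h1 h2).trans (by gcongr)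
  calc ‖S1 ∘L D1 - S2 ∘L D2‖ ≤ ‖S1 - S2‖ * ‖D1‖ + ‖S2‖ * ‖D1 - D2‖ :=
        norm_comp_sub_comp_le _ _ _ _
    _ ≤ μ⁻¹ * (L * r) * μ⁻¹ * K + μ⁻¹ * (L * r) := by gcongr
    _ = (1 + K / μ) * L / μ * r := by field_simp; ring

end Calculus

section Hilbert

variable {F : Type*} [NormedAddCommGroup F] [InnerProductSpace ℝ F]

theorem norm_le_of_hasGradientAt_of_lipschitz [CompleteSpace F] {φ : F → ℝ} {g y : F} {K : ℝ}
    (hK : 0 ≤ K) (h : HasGradientAt φ g y) (hlip : ∀ y', |φ y' - φ y| ≤ K * ‖y' - y‖) : ‖g‖ ≤ K := by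
  have := (hasGradientAt_iff_hasFDerivAt.1 h).le_of_lip' hK
    (Eventually.of_forall fun y' => by simpa using hlip y')
  rwa [LinearIsometryEquiv.norm_map] at this

theorem IsLocalMin.hasGradientAt_eq_zero [CompleteSpace F] {φ : F → ℝ} {g y : F}
    (h : IsLocalMin φ y) (hg : HasGradientAt φ g y) : g = 0 :=
  (InnerProductSpace.toDual ℝ F).map_eq_zero_iff.1
    (h.hasFDerivAt_eq_zero (hasGradientAt_iff_hasFDerivAt.1 hg))

theorem inner_sub_ge_of_strongConvex {φ : F → ℝ} {g : F → F} {μ : ℝ}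
    (h : ∀ y1 y2, φ y1 ≥ φ y2 + ⟪g y2, y1 - y2⟫ + μ / 2 * ‖y1 - y2‖ ^ 2) (y1 y2 : F) :
    μ * ‖y1 - y2‖ ^ 2 ≤ ⟪g y1 - g y2, y1 - y2⟫ := by
  have h12 := h y1 y2
  have h21 := h y2 y1
  rw [norm_sub_rev y2 y1, ← neg_sub y1 y2, inner_neg_right] at h21
  rw [inner_sub_left]
  linarith

theorem inner_apply_self_ge_of_strongMonotone {G : F → F} {H : F →L[ℝ] F} {y : F} {μ : ℝ}
    (hG : HasFDerivAt G H y) (hmono : ∀ y', μ * ‖y' - y‖ ^ 2 ≤ ⟪G y' - G y, y' - y⟫) (v : F) :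
    μ * ‖v‖ ^ 2 ≤ ⟪H v, v⟫ := by
  have hψ : HasDerivAt (fun t : ℝ => ⟪G (y + t • v) - G y, v⟫) ⟪H v, v⟫ 0 := by
    have hline : HasDerivAt (fun t : ℝ => y + t • v) v 0 := by
      simpa using ((hasDerivAt_id (0 : ℝ)).smul_const v).const_add y
    have hGline := (by simpa using hG : HasFDerivAt G H (y + (0 : ℝ) • v)).comp_hasDerivAt 0 hline
    simpa using (hGline.sub_const (G y)).inner ℝ (hasDerivAt_const (0 : ℝ) v)
  refine ge_of_tendsto (by simpa using hψ.tendsto_slope_zero_right) ?_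
  filter_upwards [self_mem_nhdsWithin] with t (ht : 0 < t)
  have h := hmono (y + t • v)
  rw [add_sub_cancel_left, inner_smul_right, norm_smul, Real.norm_of_nonneg ht.le] at h
  rw [le_inv_mul_iff₀ ht]
  nlinarith

theorem exists_inverse_of_coercive [CompleteSpace F] {H : F →L[ℝ] F} {μ : ℝ} (hμ : 0 < μ)
    (hH : ∀ v, μ * ‖v‖ ^ 2 ≤ ⟪H v, v⟫) :
    ∃ S : F →L[ℝ] F, H ∘L S = .id ℝ F ∧ S ∘L H = .id ℝ F ∧ ‖S‖ ≤ μ⁻¹ := by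
  have hbelow : ∀ v, μ * ‖v‖ ≤ ‖H v‖ := fun v => by
    rcases (norm_nonneg v).eq_or_lt with hv | hv
    · rw [← hv, mul_zero]; exact norm_nonneg _
    · nlinarith [hH v, real_inner_le_norm (H v) v]
  have hcoer : IsCoercive (innerSL ℝ ∘L H) :=
    ⟨μ, hμ, fun v => by
      rw [ContinuousLinearMap.comp_apply, innerSL_apply_apply, mul_assoc, ← sq]; exact hH v⟩
  set e := hcoer.continuousLinearEquivOfBilin
  have he : ∀ v, e v = H v := fun v =>
    (hcoer.unique_continuousLinearEquivOfBilin fun w => (innerSL_apply_apply ℝ _ _).symm).symm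
  refine ⟨e.symm, ?_, ?_, ?_⟩
  · ext w; simp [← he]
  · ext w; simp [← he]
  · refine ContinuousLinearMap.opNorm_le_bound _ (by positivity) fun w => ?_
    rw [inv_mul_eq_div, le_div_iff₀ hμ, mul_comm]
    simpa [← he] using hbelow (e.symm w)

theorem norm_sub_le_of_strongMonotone {E : Type*} [NormedAddCommGroup E] {Gy : E → F → F}
    {Y : E → F} {μ L : ℝ} (hμ : 0 < μ) (hL : 0 ≤ L) (hY : ∀ x, Gy x (Y x) = 0)
    (hmono : ∀ x y1 y2, μ * ‖y1 - y2‖ ^ 2 ≤ ⟪Gy x y1 - Gy x y2, y1 - y2⟫)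
    (hlip : ∀ x1 x2 y, ‖Gy x1 y - Gy x2 y‖ ≤ L * ‖x1 - x2‖) (x1 x2 : E) :
    ‖Y x1 - Y x2‖ ≤ L / μ * ‖x1 - x2‖ := by
  have h : μ * ‖Y x1 - Y x2‖ ^ 2 ≤ L * ‖x1 - x2‖ * ‖Y x1 - Y x2‖ :=
    calc μ * ‖Y x1 - Y x2‖ ^ 2 ≤ ⟪Gy x1 (Y x1) - Gy x1 (Y x2), Y x1 - Y x2⟫ := hmono _ _ _
      _ = ⟪Gy x2 (Y x2) - Gy x1 (Y x2), Y x1 - Y x2⟫ := by rw [hY, hY]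
      _ ≤ ‖Gy x2 (Y x2) - Gy x1 (Y x2)‖ * ‖Y x1 - Y x2‖ := real_inner_le_norm _ _
      _ ≤ L * ‖x1 - x2‖ * ‖Y x1 - Y x2‖ := by
        gcongr; simpa only [norm_sub_rev x2 x1] using hlip x2 x1 (Y x2)
  rcases (norm_nonneg (Y x1 - Y x2)).eq_or_lt with h0 | h0
  · rw [← h0]
    positivity
  · rw [div_mul_eq_mul_div, le_div_iff₀ hμ]
    nlinarith

end Hilbert

section Implicit

variable {E F : Type*} [NormedAddCommGroup E] [NormedSpace ℝ E]
  [NormedAddCommGroup F] [InnerProductSpace ℝ F]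

theorem hasFDerivAt_of_implicit {Gy : E → F → F} {D : E → F → E →L[ℝ] F}
    {H : E → F → F →L[ℝ] F} {Y : E → F} {S : F →L[ℝ] F} {x : E} {κ L : ℝ} (hL : 0 ≤ L)
    (hD : ∀ x y, HasFDerivAt (Gy · y) (D x y) x) (hH : ∀ x y, HasFDerivAt (Gy x ·) (H x y) y)
    (hD_lip : ∀ x1 x2 y, ‖D x1 y - D x2 y‖ ≤ L * ‖x1 - x2‖)
    (hH_lip : ∀ x1 y1 x2 y2, ‖H x1 y1 - H x2 y2‖ ≤ L * (‖x1 - x2‖ + ‖y1 - y2‖))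
    (hY : ∀ x, Gy x (Y x) = 0) (hY_lip : ∀ x', ‖Y x' - Y x‖ ≤ κ * ‖x' - x‖)
    (hS : S ∘L H x (Y x) = .id ℝ F) :
    HasFDerivAt Y (-(S ∘L D x (Y x))) x := by
  refine hasFDerivAt_of_norm_sub_sub_le_sq (C := ‖S‖ * (L * (1 + κ) ^ 2)) fun x' => ?_
  have hSH : S (H x (Y x) (Y x' - Y x)) = Y x' - Y x := by
    simpa using congr($hS (Y x' - Y x))
  have htaylor :=
    norm_sub_sub_sub_le_of_lipschitz_partials hL hD hH hD_lip hH_lip x x' (Y x) (Y x')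
  rw [hY, hY, zero_sub_zero] at htaylor
  calc ‖Y x' - Y x - (-(S ∘L D x (Y x))) (x' - x)‖
      = ‖S (-(0 - D x (Y x) (x' - x) - H x (Y x) (Y x' - Y x)))‖ := by
        rw [zero_sub, neg_sub, sub_neg_eq_add, map_add, hSH, neg_apply,
          ContinuousLinearMap.comp_apply, sub_neg_eq_add]
    _ ≤ ‖S‖ * (L * (‖x' - x‖ + ‖Y x' - Y x‖) ^ 2) :=
      (S.le_opNorm _).trans (mul_le_mul_of_nonneg_left (by rwa [norm_neg]) (norm_nonneg _))
    _ ≤ ‖S‖ * (L * ((1 + κ) * ‖x' - x‖) ^ 2) := by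
      have : ‖x' - x‖ + ‖Y x' - Y x‖ ≤ (1 + κ) * ‖x' - x‖ := by linarith [hY_lip x']
      gcongr
    _ = ‖S‖ * (L * (1 + κ) ^ 2) * ‖x' - x‖ ^ 2 := by ring

end Implicit

section Hypergradient

variable {E F : Type*} [NormedAddCommGroup E] [InnerProductSpace ℝ E] [CompleteSpace E]
  [NormedAddCommGroup F] [InnerProductSpace ℝ F] [CompleteSpace F]

theorem hasGradientAt_comp_of_lipschitz_partials
    {Φ : E → F → ℝ} {Fx : E → F → E} {Fy : E → F → F} {L : ℝ} (hL : 0 ≤ L)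
    (hFx : ∀ x y, HasGradientAt (Φ · y) (Fx x y) x)
    (hFy : ∀ x y, HasGradientAt (Φ x ·) (Fy x y) y)
    (hFx_lip : ∀ x1 x2 y, ‖Fx x1 y - Fx x2 y‖ ≤ L * ‖x1 - x2‖)
    (hFy_lip : ∀ x1 y1 x2 y2, ‖Fy x1 y1 - Fy x2 y2‖ ≤ L * (‖x1 - x2‖ + ‖y1 - y2‖))
    {Y : E → F} {Y' : E →L[ℝ] F} {x : E} (hY : HasFDerivAt Y Y' x) :
    HasGradientAt (fun x => Φ x (Y x)) (Fx x (Y x) + Y'.adjoint (Fy x (Y x))) x := by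
  have hΦ := hasFDerivAt_uncurry_of_lipschitz_partials hL
    (fun x y => hasGradientAt_iff_hasFDerivAt.1 (hFx x y))
    (fun x y => hasGradientAt_iff_hasFDerivAt.1 (hFy x y))
    (fun x1 x2 y => by rw [← map_sub, LinearIsometryEquiv.norm_map]; exact hFx_lip x1 x2 y)
    (fun x1 y1 x2 y2 => by
      rw [← map_sub, LinearIsometryEquiv.norm_map]; exact hFy_lip x1 y1 x2 y2) x (Y x)
  rw [hasGradientAt_iff_hasFDerivAt]
  refine (hΦ.comp x ((hasFDerivAt_id x).prodMk hY)).congr_fderiv ?_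
  ext v
  simp [ContinuousLinearMap.adjoint_inner_left]

theorem norm_add_adjoint_sub_le (a1 a2 : E) (b1 b2 : F) (T1 T2 : E →L[ℝ] F) :
    ‖(a1 + T1.adjoint b1) - (a2 + T2.adjoint b2)‖
      ≤ ‖a1 - a2‖ + (‖T1 - T2‖ * ‖b1‖ + ‖T2‖ * ‖b1 - b2‖) := by
  have : (a1 + T1.adjoint b1) - (a2 + T2.adjoint b2)
      = (a1 - a2) + ((T1 - T2).adjoint b1 + T2.adjoint (b1 - b2)) := by
    rw [map_sub, map_sub, sub_apply]; abel
  rw [this]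
  refine (norm_add_le _ _).trans ?_
  gcongr
  refine (norm_add_le _ _).trans ?_
  gcongr <;>
    exact (ContinuousLinearMap.le_opNorm _ _).trans (by rw [LinearIsometryEquiv.norm_map])

theorem norm_hypergradient_sub_le {Φ : E → F → ℝ} {Fx : E → F → E} {Fy : E → F → F}
    {Gy : E → F → F} {D : E → F → E →L[ℝ] F} {H : E → F → F →L[ℝ] F} {Y : E → F}
    {gPhi : E → E} {μ lf0 lf1 lg1 lg2 : ℝ}
    (hμ : 0 < μ) (hlf1 : 0 ≤ lf1) (hlg1 : 0 ≤ lg1) (hlg2 : 0 ≤ lg2)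
    (hFx : ∀ x y, HasGradientAt (Φ · y) (Fx x y) x)
    (hFy : ∀ x y, HasGradientAt (Φ x ·) (Fy x y) y)
    (hFx_lip : ∀ x1 y1 x2 y2, ‖Fx x1 y1 - Fx x2 y2‖ ≤ lf1 * (‖x1 - x2‖ + ‖y1 - y2‖))
    (hFy_lip : ∀ x1 y1 x2 y2, ‖Fy x1 y1 - Fy x2 y2‖ ≤ lf1 * (‖x1 - x2‖ + ‖y1 - y2‖))
    (hFy_bd : ∀ x y, ‖Fy x y‖ ≤ lf0)
    (hD : ∀ x y, HasFDerivAt (Gy · y) (D x y) x) (hH : ∀ x y, HasFDerivAt (Gy x ·) (H x y) y)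
    (hD_lip : ∀ x1 y1 x2 y2, ‖D x1 y1 - D x2 y2‖ ≤ lg2 * (‖x1 - x2‖ + ‖y1 - y2‖))
    (hH_lip : ∀ x1 y1 x2 y2, ‖H x1 y1 - H x2 y2‖ ≤ lg2 * (‖x1 - x2‖ + ‖y1 - y2‖))
    (hGy_lip : ∀ x1 x2 y, ‖Gy x1 y - Gy x2 y‖ ≤ lg1 * ‖x1 - x2‖)
    (hmono : ∀ x y1 y2, μ * ‖y1 - y2‖ ^ 2 ≤ ⟪Gy x y1 - Gy x y2, y1 - y2⟫)
    (hY : ∀ x, Gy x (Y x) = 0)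
    (hgPhi : ∀ x, HasGradientAt (fun x => Φ x (Y x)) (gPhi x) x) (x1 x2 : E) :
    ‖gPhi x1 - gPhi x2‖ ≤ (1 + lg1 / μ) ^ 2 * (lf1 + lf0 * lg2 / μ) * ‖x1 - x2‖ := by
  have hY_lip := norm_sub_le_of_strongMonotone hμ hlg1 hY hmono hGy_lip
  have hD_bd : ∀ x y, ‖D x y‖ ≤ lg1 := fun x y =>
    (hD x y).le_of_lip' hlg1 (Eventually.of_forall fun x' => hGy_lip x' x y)
  choose S hHS hSH hS_bd using fun x => exists_inverse_of_coercive hμ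
    (inner_apply_self_ge_of_strongMonotone (hH x (Y x)) fun y' => hmono x y' (Y x))
  have hgPhi_eq : ∀ x, gPhi x = Fx x (Y x) + (-(S x ∘L D x (Y x))).adjoint (Fy x (Y x)) :=
    fun x => (hgPhi x).unique <| hasGradientAt_comp_of_lipschitz_partials hlf1 hFx hFy
      (fun x1 x2 y => by simpa using hFx_lip x1 y x2 y) hFy_lip
      (hasFDerivAt_of_implicit hlg2 hD hH (fun x1 x2 y => by simpa using hD_lip x1 y x2 y) hH_lip
        hY (hY_lip · x) (hSH x))
  have hr : ‖x1 - x2‖ + ‖Y x1 - Y x2‖ ≤ (1 + lg1 / μ) * ‖x1 - x2‖ := by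
    linarith [hY_lip x1 x2]
  have hT_bd : ‖-(S x2 ∘L D x2 (Y x2))‖ ≤ lg1 / μ := by
    rw [norm_neg, div_eq_inv_mul]
    exact (ContinuousLinearMap.opNorm_comp_le _ _).trans
      (mul_le_mul (hS_bd _) (hD_bd _ _) (norm_nonneg _) (by positivity))
  have hT_sub : ‖-(S x1 ∘L D x1 (Y x1)) - -(S x2 ∘L D x2 (Y x2))‖
      ≤ (1 + lg1 / μ) * lg2 / μ * ((1 + lg1 / μ) * ‖x1 - x2‖) := by
    rw [neg_sub_neg, norm_sub_rev]
    exact norm_inverse_comp_sub_le hμ (hSH x1) (hHS x2) (hS_bd x1) (hS_bd x2) (hD_bd _ _)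
      ((hH_lip _ _ _ _).trans (by gcongr)) ((hD_lip _ _ _ _).trans (by gcongr))
  rw [hgPhi_eq, hgPhi_eq]
  calc _ ≤ _ := norm_add_adjoint_sub_le _ _ _ _ _ _
    _ ≤ lf1 * ((1 + lg1 / μ) * ‖x1 - x2‖)
          + ((1 + lg1 / μ) * lg2 / μ * ((1 + lg1 / μ) * ‖x1 - x2‖) * lf0
            + lg1 / μ * (lf1 * ((1 + lg1 / μ) * ‖x1 - x2‖))) := by
      gcongr
      · exact (hFx_lip _ _ _ _).trans (by gcongr)
      · exact hFy_bd _ _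
      · exact (hFy_lip _ _ _ _).trans (by gcongr)
    _ = (1 + lg1 / μ) ^ 2 * (lf1 + lf0 * lg2 / μ) * ‖x1 - x2‖ := by ring

end Hypergradient

section Average

variable {N : ℕ}

theorem norm_avg_le {M : Type*} [SeminormedAddCommGroup M] [NormedSpace ℝ M] (hN : 0 < N)
    {a : Fin N → M} {B : ℝ} (h : ∀ i, ‖a i‖ ≤ B) : ‖(N : ℝ)⁻¹ • ∑ i, a i‖ ≤ B := by
  have hN' : (0 : ℝ) < N := Nat.cast_pos.2 hN
  rw [norm_smul, norm_inv, Real.norm_natCast, inv_mul_le_iff₀ hN']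
  simpa using (norm_sum_le _ _).trans (Finset.sum_le_card_nsmul Finset.univ _ _ fun i _ => h i)

theorem norm_avg_sub_avg_le {M : Type*} [SeminormedAddCommGroup M] [NormedSpace ℝ M]
    (hN : 0 < N) {a b : Fin N → M} {B : ℝ} (h : ∀ i, ‖a i - b i‖ ≤ B) :
    ‖(N : ℝ)⁻¹ • ∑ i, a i - (N : ℝ)⁻¹ • ∑ i, b i‖ ≤ B := by
  rw [← smul_sub, ← Finset.sum_sub_distrib]
  exact norm_avg_le hN h

theorem le_inner_avg_sub_avg {F : Type*} [NormedAddCommGroup F] [InnerProductSpace ℝ F]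
    (hN : 0 < N) {a b : Fin N → F} {v : F} {c : ℝ} (h : ∀ i, c ≤ ⟪a i - b i, v⟫) :
    c ≤ ⟪(N : ℝ)⁻¹ • ∑ i, a i - (N : ℝ)⁻¹ • ∑ i, b i, v⟫ := by
  have hN' : (0 : ℝ) < N := Nat.cast_pos.2 hN
  rw [← smul_sub, ← Finset.sum_sub_distrib, real_inner_smul_left, sum_inner, le_inv_mul_iff₀ hN']
  simpa using Finset.card_nsmul_le_sum Finset.univ _ _ fun i _ => h i

theorem hasFDerivAt_avg {E G : Type*} [NormedAddCommGroup E] [NormedSpace ℝ E]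
    [NormedAddCommGroup G] [NormedSpace ℝ G] {φ : Fin N → E → G} {φ' : Fin N → E →L[ℝ] G}
    {x : E} (h : ∀ i, HasFDerivAt (φ i) (φ' i) x) :
    HasFDerivAt (fun x => (N : ℝ)⁻¹ • ∑ i, φ i x) ((N : ℝ)⁻¹ • ∑ i, φ' i) x :=
  (HasFDerivAt.fun_sum fun i _ => h i).const_smul _

theorem hasGradientAt_avg {E : Type*} [NormedAddCommGroup E] [InnerProductSpace ℝ E]
    [CompleteSpace E] {φ : Fin N → E → ℝ} {g : Fin N → E} {x : E}
    (h : ∀ i, HasGradientAt (φ i) (g i) x) :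
    HasGradientAt (fun x => (N : ℝ)⁻¹ * ∑ i, φ i x) ((N : ℝ)⁻¹ • ∑ i, g i) x := by
  rw [hasGradientAt_iff_hasFDerivAt, map_smul, map_sum]
  exact hasFDerivAt_avg fun i => hasGradientAt_iff_hasFDerivAt.1 (h i)

end Average

theorem gradPhi_lipschitz_general
    {d1 d2 N : ℕ} (hN : 0 < N)
    (f g : Fin N → Vec d1 → Vec d2 → ℝ)
    (μg lf0 lf1 lg1 lg2 : ℝ)
    (hμg : 0 < μg) (hlf0 : 0 ≤ lf0) (hlf1 : 0 ≤ lf1) (hlg1 : 0 ≤ lg1) (hlg2 : 0 ≤ lg2)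
    -- partial gradients of g_i
    (gxg : Fin N → Vec d1 → Vec d2 → Vec d1)
    (gyg : Fin N → Vec d1 → Vec d2 → Vec d2)
    (hgyg : ∀ i x y, HasGradientAt (fun y' => g i x y') (gyg i x y) y)
    -- partial gradients of f_i
    (gxf : Fin N → Vec d1 → Vec d2 → Vec d1)
    (gyf : Fin N → Vec d1 → Vec d2 → Vec d2)
    (hgxf : ∀ i x y, HasGradientAt (fun x' => f i x' y) (gxf i x y) x)
    (hgyf : ∀ i x y, HasGradientAt (fun y' => f i x y') (gyf i x y) y)
    -- each g_i(x, ·) is μ_g-strongly convex in y (first-order characterization)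
    (hsc : ∀ i x y1 y2, g i x y1 ≥ g i x y2 + ⟪gyg i x y2, y1 - y2⟫ + μg / 2 * ‖y1 - y2‖ ^ 2)
    -- f_i is l_{f,0}-Lipschitz (ℓ2 norm on the joint variable)
    (hLf0 : ∀ i x1 y1 x2 y2, |f i x1 y1 - f i x2 y2|
      ≤ lf0 * Real.sqrt (‖x1 - x2‖ ^ 2 + ‖y1 - y2‖ ^ 2))
    -- ∇f_i is l_{f,1}-Lipschitz
    (hLf1 : ∀ i x1 y1 x2 y2,
      Real.sqrt (‖gxf i x1 y1 - gxf i x2 y2‖ ^ 2 + ‖gyf i x1 y1 - gyf i x2 y2‖ ^ 2)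
        ≤ lf1 * Real.sqrt (‖x1 - x2‖ ^ 2 + ‖y1 - y2‖ ^ 2))
    -- ∇g_i is l_{g,1}-Lipschitz
    (hLg1 : ∀ i x1 y1 x2 y2,
      Real.sqrt (‖gxg i x1 y1 - gxg i x2 y2‖ ^ 2 + ‖gyg i x1 y1 - gyg i x2 y2‖ ^ 2)
        ≤ lg1 * Real.sqrt (‖x1 - x2‖ ^ 2 + ‖y1 - y2‖ ^ 2))
    -- second derivative blocks of g_i and their l_{g,2}-Lipschitz continuity
    (Dxy : Fin N → Vec d1 → Vec d2 → (Vec d1 →L[ℝ] Vec d2))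
    (Hyy : Fin N → Vec d1 → Vec d2 → (Vec d2 →L[ℝ] Vec d2))
    (hDxy : ∀ i x y, HasFDerivAt (fun x' => gyg i x' y) (Dxy i x y) x)
    (hHyy : ∀ i x y, HasFDerivAt (fun y' => gyg i x y') (Hyy i x y) y)
    (hLg2xy : ∀ i x1 y1 x2 y2, ‖Dxy i x1 y1 - Dxy i x2 y2‖
      ≤ lg2 * Real.sqrt (‖x1 - x2‖ ^ 2 + ‖y1 - y2‖ ^ 2))
    (hLg2yy : ∀ i x1 y1 x2 y2, ‖Hyy i x1 y1 - Hyy i x2 y2‖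
      ≤ lg2 * Real.sqrt (‖x1 - x2‖ ^ 2 + ‖y1 - y2‖ ^ 2))
    -- the constant M_f
    (Mf : ℝ) (hMf : Mf = lf1 + lg1 * lf1 / μg + lf0 / μg * (lg2 + lg1 * lg2 / μg))
    (Lf : ℝ) (hLf : Lf = lf1 + lg1 * (lf1 + Mf) / μg + lf0 / μg * (lg2 + lg1 * lg2 / μg))
    -- y*(x) minimizes the average lower-level objective
    (ystar : Vec d1 → Vec d2)
    (hystar : ∀ x y, (N : ℝ)⁻¹ * ∑ i, g i x (ystar x) ≤ (N : ℝ)⁻¹ * ∑ i, g i x y)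
    -- ∇Φ : the gradient of Φ(x) = f(x, y*(x))
    (gPhi : Vec d1 → Vec d1)
    (hgPhi : ∀ x, HasGradientAt (fun x' => (N : ℝ)⁻¹ * ∑ i, f i x' (ystar x')) (gPhi x) x) :
    ∀ x1 x2 : Vec d1, ‖gPhi x1 - gPhi x2‖ ≤ Lf * ‖x1 - x2‖ := by
  have hLf' : Lf = (1 + lg1 / μg) ^ 2 * (lf1 + lf0 * lg2 / μg) := by
    rw [hLf, hMf]; field_simp; ring
  have hgf_lip i x1 y1 x2 y2 :=
    le_mul_add_of_sqrt_le hlf1 (norm_nonneg _) (norm_nonneg _) (hLf1 i x1 y1 x2 y2)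
  have hgyg_lip i x1 x2 y := by
    simpa using (le_mul_add_of_sqrt_le hlg1 (norm_nonneg _) (norm_nonneg _) (hLg1 i x1 y x2 y)).2
  have hlg2_sqrt (x1 x2 : Vec d1) (y1 y2 : Vec d2) :
      lg2 * √(‖x1 - x2‖ ^ 2 + ‖y1 - y2‖ ^ 2) ≤ lg2 * (‖x1 - x2‖ + ‖y1 - y2‖) :=
    mul_le_mul_of_nonneg_left (sqrt_sq_add_sq_le_add (norm_nonneg _) (norm_nonneg _)) hlg2
  have hGy_zero x : (N : ℝ)⁻¹ • ∑ i, gyg i x (ystar x) = 0 :=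
    IsLocalMin.hasGradientAt_eq_zero (Eventually.of_forall (hystar x))
      (hasGradientAt_avg fun i => hgyg i x (ystar x))
  rw [hLf']
  exact norm_hypergradient_sub_le (Φ := fun x y => (N : ℝ)⁻¹ * ∑ i, f i x y)
    (D := fun x y => (N : ℝ)⁻¹ • ∑ i, Dxy i x y) (H := fun x y => (N : ℝ)⁻¹ • ∑ i, Hyy i x y)
    hμg hlf1 hlg1 hlg2
    (fun x y => hasGradientAt_avg fun i => hgxf i x y)
    (fun x y => hasGradientAt_avg fun i => hgyf i x y)
    (fun _ _ _ _ => norm_avg_sub_avg_le hN fun i => (hgf_lip i ..).1)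
    (fun _ _ _ _ => norm_avg_sub_avg_le hN fun i => (hgf_lip i ..).2)
    (fun x y => norm_avg_le hN fun i => norm_le_of_hasGradientAt_of_lipschitz hlf0 (hgyf i x y)
      fun y' => by simpa using hLf0 i x y' x y)
    (fun x y => hasFDerivAt_avg fun i => hDxy i x y)
    (fun x y => hasFDerivAt_avg fun i => hHyy i x y)
    (fun _ _ _ _ => norm_avg_sub_avg_le hN fun i => (hLg2xy i ..).trans (hlg2_sqrt ..))
    (fun _ _ _ _ => norm_avg_sub_avg_le hN fun i => (hLg2yy i ..).trans (hlg2_sqrt ..))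
    (fun _ _ _ => norm_avg_sub_avg_le hN fun i => hgyg_lip i ..)
    (fun x y1 y2 => le_inner_avg_sub_avg hN fun i => inner_sub_ge_of_strongConvex (hsc i x) y1 y2)
    hGy_zero hgPhi

theorem gradPhi_lipschitz
    {d1 d2 N : ℕ} (hN : 0 < N)
    (f g : Fin N → Vec d1 → Vec d2 → ℝ)
    (μg lf0 lf1 lg1 lg2 : ℝ)
    (hμg : 0 < μg) (hlf0 : 0 ≤ lf0) (hlf1 : 0 ≤ lf1) (hlg1 : 0 ≤ lg1) (hlg2 : 0 ≤ lg2)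
    -- twice continuous differentiability of upper- and lower-level objectives
    (hf2 : ∀ i, ContDiff ℝ 2 (fun p : Vec d1 × Vec d2 => f i p.1 p.2))
    (hg2 : ∀ i, ContDiff ℝ 2 (fun p : Vec d1 × Vec d2 => g i p.1 p.2))
    -- partial gradients of g_i
    (gxg : Fin N → Vec d1 → Vec d2 → Vec d1)
    (gyg : Fin N → Vec d1 → Vec d2 → Vec d2)
    (hgxg : ∀ i x y, HasGradientAt (fun x' => g i x' y) (gxg i x y) x)
    (hgyg : ∀ i x y, HasGradientAt (fun y' => g i x y') (gyg i x y) y)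
    -- partial gradients of f_i
    (gxf : Fin N → Vec d1 → Vec d2 → Vec d1)
    (gyf : Fin N → Vec d1 → Vec d2 → Vec d2)
    (hgxf : ∀ i x y, HasGradientAt (fun x' => f i x' y) (gxf i x y) x)
    (hgyf : ∀ i x y, HasGradientAt (fun y' => f i x y') (gyf i x y) y)
    -- each g_i(x, ·) is μ_g-strongly convex in y (first-order characterization)
    (hsc : ∀ i x y1 y2, g i x y1 ≥ g i x y2 + ⟪gyg i x y2, y1 - y2⟫ + μg / 2 * ‖y1 - y2‖ ^ 2)
    -- f_i is l_{f,0}-Lipschitz (ℓ2 norm on the joint variable)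
    (hLf0 : ∀ i x1 y1 x2 y2, |f i x1 y1 - f i x2 y2|
      ≤ lf0 * Real.sqrt (‖x1 - x2‖ ^ 2 + ‖y1 - y2‖ ^ 2))
    -- ∇f_i is l_{f,1}-Lipschitz
    (hLf1 : ∀ i x1 y1 x2 y2,
      Real.sqrt (‖gxf i x1 y1 - gxf i x2 y2‖ ^ 2 + ‖gyf i x1 y1 - gyf i x2 y2‖ ^ 2)
        ≤ lf1 * Real.sqrt (‖x1 - x2‖ ^ 2 + ‖y1 - y2‖ ^ 2))
    -- ∇g_i is l_{g,1}-Lipschitz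
    (hLg1 : ∀ i x1 y1 x2 y2,
      Real.sqrt (‖gxg i x1 y1 - gxg i x2 y2‖ ^ 2 + ‖gyg i x1 y1 - gyg i x2 y2‖ ^ 2)
        ≤ lg1 * Real.sqrt (‖x1 - x2‖ ^ 2 + ‖y1 - y2‖ ^ 2))
    -- second derivative blocks of g_i and their l_{g,2}-Lipschitz continuity
    (Dxy : Fin N → Vec d1 → Vec d2 → (Vec d1 →L[ℝ] Vec d2))
    (Hyy : Fin N → Vec d1 → Vec d2 → (Vec d2 →L[ℝ] Vec d2))
    (hDxy : ∀ i x y, HasFDerivAt (fun x' => gyg i x' y) (Dxy i x y) x)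
    (hHyy : ∀ i x y, HasFDerivAt (fun y' => gyg i x y') (Hyy i x y) y)
    (hLg2xy : ∀ i x1 y1 x2 y2, ‖Dxy i x1 y1 - Dxy i x2 y2‖
      ≤ lg2 * Real.sqrt (‖x1 - x2‖ ^ 2 + ‖y1 - y2‖ ^ 2))
    (hLg2yy : ∀ i x1 y1 x2 y2, ‖Hyy i x1 y1 - Hyy i x2 y2‖
      ≤ lg2 * Real.sqrt (‖x1 - x2‖ ^ 2 + ‖y1 - y2‖ ^ 2))
    -- inverse of ∇²_{yy} g_i (well defined since ∇²_{yy} g_i ⪰ μ_g I)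
    (Hinv : Fin N → Vec d1 → Vec d2 → (Vec d2 →L[ℝ] Vec d2))
    (hHinv : ∀ i x y, (Hyy i x y).comp (Hinv i x y) = ContinuousLinearMap.id ℝ (Vec d2)
      ∧ (Hinv i x y).comp (Hyy i x y) = ContinuousLinearMap.id ℝ (Vec d2))
    -- the surrogate hypergradient of client i
    (barf : Fin N → Vec d1 → Vec d2 → Vec d1)
    (hbarf : ∀ i x y, barf i x y
      = gxf i x y - (ContinuousLinearMap.adjoint (Dxy i x y)) (Hinv i x y (gyf i x y)))
    -- the constant M_f
    (Mf : ℝ) (hMf : Mf = lf1 + lg1 * lf1 / μg + lf0 / μg * (lg2 + lg1 * lg2 / μg))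
    (Lf : ℝ) (hLf : Lf = lf1 + lg1 * (lf1 + Mf) / μg + lf0 / μg * (lg2 + lg1 * lg2 / μg))
    -- y*(x) minimizes the average lower-level objective
    (ystar : Vec d1 → Vec d2)
    (hystar : ∀ x y, (N : ℝ)⁻¹ * ∑ i, g i x (ystar x) ≤ (N : ℝ)⁻¹ * ∑ i, g i x y)
    -- ∇Φ : the gradient of Φ(x) = f(x, y*(x))
    (gPhi : Vec d1 → Vec d1)
    (hgPhi : ∀ x, HasGradientAt (fun x' => (N : ℝ)⁻¹ * ∑ i, f i x' (ystar x')) (gPhi x) x) :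
    ∀ x1 x2 : Vec d1, ‖gPhi x1 - gPhi x2‖ ≤ Lf * ‖x1 - x2‖ :=
  gradPhi_lipschitz_general hN f g μg lf0 lf1 lg1 lg2 hμg hlf0 hlf1 hlg1 hlg2 gxg gyg hgyg gxf gyf
    hgxf hgyf hsc hLf0 hLf1 hLg1 Dxy Hyy hDxy hHyy hLg2xy hLg2yy Mf hMf Lf hLf ystar hystar gPhi
    hgPhi

end
end

section
/- For every client i, every x ∈ ℝ^{d1} and every y ∈ ℝ^{d2}, the surrogate hypergradient is M_f-Lipschitz in its second argument at the lower-level solution: ‖∇̄f_i(x, y) − ∇̄f_i(x, y*(x))‖ ≤ M_f ‖y − y*(x)‖. -/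
open scoped RealInnerProductSpace

noncomputable section

/-!
Write `∇̄f_i(x, y) = ∇ₓf_i − A(y) B(y) v(y)` with `A = (∇²_{xy} g_i)ᵀ`, `H = ∇²_{yy} g_i`,
`B = H⁻¹` and `v = ∇_y f_i`. The factors are bounded by `‖A‖ ≤ l_{g,1}`, `‖v‖ ≤ l_{f,0}` and
`‖B‖ ≤ 1/μ_g` (strong convexity makes `H` `μ_g`-coercive), and they are Lipschitz in `y`, the
inverse through `B(y) − B(y') = B(y) (H(y') − H(y)) B(y')`. Telescoping the triple product
`A B v` then produces `M_f` term by term.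
-/

section JointNorm

variable {E F : Type*} [NormedAddCommGroup E] [NormedAddCommGroup F]

lemma norm_le_sqrt_sq_add_sq_left (a : E) (b : F) : ‖a‖ ≤ √(‖a‖ ^ 2 + ‖b‖ ^ 2) :=
  Real.le_sqrt_of_sq_le (le_add_of_nonneg_right (sq_nonneg _))

lemma norm_le_sqrt_sq_add_sq_right (a : E) (b : F) : ‖b‖ ≤ √(‖a‖ ^ 2 + ‖b‖ ^ 2) :=
  Real.le_sqrt_of_sq_le (le_add_of_nonneg_left (sq_nonneg _))

end JointNorm

lemma HasGradientAt.norm_le_of_lip {F : Type*} [NormedAddCommGroup F] [InnerProductSpace ℝ F]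
    [CompleteSpace F] {f : F → ℝ} {f' y : F} (hf : HasGradientAt f f' y) {C : ℝ} (hC : 0 ≤ C)
    (hlip : ∀ y', |f y' - f y| ≤ C * ‖y' - y‖) : ‖f'‖ ≤ C := by
  simpa using hf.hasFDerivAt.le_of_lip' hC (Filter.Eventually.of_forall hlip)

section InnerProductSpace

variable {F : Type*} [NormedAddCommGroup F] [InnerProductSpace ℝ F]

lemma strongly_monotone_of_strongly_convex {f : F → ℝ} {f' : F → F} {μ : ℝ}
    (hf : ∀ a b, f a ≥ f b + ⟪f' b, a - b⟫ + μ / 2 * ‖a - b‖ ^ 2) (a b : F) :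
    μ * ‖a - b‖ ^ 2 ≤ ⟪f' a - f' b, a - b⟫ := by
  have hab := hf a b
  have hba := hf b a
  rw [← neg_sub a b, inner_neg_right, norm_neg] at hba
  rw [inner_sub_left]
  linarith

lemma HasFDerivAt.coercive_of_strongly_monotone {G : F → F} {H : F →L[ℝ] F} {y : F} {μ : ℝ}
    (hG : HasFDerivAt G H y) (hmono : ∀ a b, μ * ‖a - b‖ ^ 2 ≤ ⟪G a - G b, a - b⟫) (v : F) :
    μ * ‖v‖ ^ 2 ≤ ⟪H v, v⟫ := by
  set φ : ℝ → ℝ := fun t => ⟪G (y + t • v), v⟫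
  have hline : HasDerivAt (fun t : ℝ => y + t • v) v 0 := by
    simpa using ((hasDerivAt_id (0 : ℝ)).smul_const v).const_add y
  have hφ : HasDerivAt φ ⟪H v, v⟫ 0 := by
    have hG' : HasFDerivAt G H (y + (0 : ℝ) • v) := by simpa using hG
    simpa using (hG'.comp_hasDerivAt 0 hline).inner ℝ (hasDerivAt_const 0 v)
  refine ge_of_tendsto (hasDerivAt_iff_tendsto_slope.mp hφ) ?_
  filter_upwards [self_mem_nhdsWithin] with t (ht : t ≠ 0)
  have hm := hmono (y + t • v) y
  rw [add_sub_cancel_left, norm_smul, mul_pow, Real.norm_eq_abs, sq_abs, inner_sub_left,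
    inner_smul_right, inner_smul_right] at hm
  have ht2 : 0 < t * t := mul_self_pos.mpr ht
  rw [slope_def_field, sub_zero, ← mul_div_mul_left _ _ ht, le_div_iff₀ ht2]
  simp only [φ, zero_smul, add_zero]
  linarith

lemma ContinuousLinearMap.mul_norm_le_norm_apply_of_coercive {H : F →L[ℝ] F} {μ : ℝ}
    (hH : ∀ v, μ * ‖v‖ ^ 2 ≤ ⟪H v, v⟫) (v : F) : μ * ‖v‖ ≤ ‖H v‖ := by
  rcases (norm_nonneg v).eq_or_lt with hv | hv
  · simp [← hv]
  · refine le_of_mul_le_mul_right ?_ hv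
    calc μ * ‖v‖ * ‖v‖ = μ * ‖v‖ ^ 2 := by ring
      _ ≤ ⟪H v, v⟫ := hH v
      _ ≤ ‖H v‖ * ‖v‖ := real_inner_le_norm _ _

lemma ContinuousLinearMap.norm_rightInverse_le_of_coercive {H B : F →L[ℝ] F} {μ : ℝ}
    (hμ : 0 < μ) (hH : ∀ v, μ * ‖v‖ ^ 2 ≤ ⟪H v, v⟫) (hHB : H.comp B = .id ℝ F) :
    ‖B‖ ≤ μ⁻¹ := by
  refine opNorm_le_bound _ (inv_nonneg.mpr hμ.le) fun w => ?_
  have hw := mul_norm_le_norm_apply_of_coercive hH (B w)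
  rw [← comp_apply, hHB, id_apply] at hw
  rwa [← le_div_iff₀' hμ, div_eq_inv_mul] at hw

end InnerProductSpace

lemma sub_eq_mul_sub_mul_of_mul_eq_one {R : Type*} [Ring R] {a b a' b' : R}
    (ha : a' * a = 1) (hb : b * b' = 1) : a' - b' = a' * (b - a) * b' := by
  rw [mul_sub, sub_mul, mul_assoc, hb, mul_one, ha, one_mul]

lemma norm_sub_le_of_mul_eq_one {R : Type*} [NormedRing R] {a b a' b' : R}
    (ha : a' * a = 1) (hb : b * b' = 1) : ‖a' - b'‖ ≤ ‖a'‖ * ‖b - a‖ * ‖b'‖ := by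
  rw [sub_eq_mul_sub_mul_of_mul_eq_one ha hb]
  exact norm_mul₃_le

lemma ContinuousLinearMap.norm_sub_apply_apply_sub_sub_apply_apply_le {𝕜 E F G : Type*}
    [NontriviallyNormedField 𝕜] [SeminormedAddCommGroup E] [NormedSpace 𝕜 E]
    [SeminormedAddCommGroup F] [NormedSpace 𝕜 F] [SeminormedAddCommGroup G] [NormedSpace 𝕜 G]
    (a a' : G) (A A' : F →L[𝕜] G) (B B' : E →L[𝕜] F) (v v' : E) :
    ‖(a - A (B v)) - (a' - A' (B' v'))‖ ≤ ‖a - a'‖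
      + ‖A‖ * ‖B‖ * ‖v - v'‖ + ‖A‖ * ‖B - B'‖ * ‖v'‖ + ‖A - A'‖ * ‖B'‖ * ‖v'‖ := by
  have hsplit : (a - A (B v)) - (a' - A' (B' v'))
      = (a - a') - (A (B (v - v')) + A ((B - B') v') + (A - A') (B' v')) := by
    simp only [map_sub, sub_apply]
    abel
  have hcomp : ∀ (C : F →L[𝕜] G) (D : E →L[𝕜] F) w, ‖C (D w)‖ ≤ ‖C‖ * ‖D‖ * ‖w‖ :=
    fun C D w => (le_opNorm _ _).trans (by rw [mul_assoc]; gcongr; exact le_opNorm _ _)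
  rw [hsplit]
  linarith [norm_sub_le (a - a') (A (B (v - v')) + A ((B - B') v') + (A - A') (B' v')),
    norm_add₃_le (a := A (B (v - v'))) (b := A ((B - B') v')) (c := (A - A') (B' v')),
    hcomp A B (v - v'), hcomp A (B - B') v', hcomp (A - A') B' v']

theorem surrogate_hypergradient_lipschitz_in_y_general
    {d1 d2 N : ℕ}
    (f g : Fin N → Vec d1 → Vec d2 → ℝ)
    (μg lf0 lf1 lg1 lg2 : ℝ)
    (hμg : 0 < μg) (hlf0 : 0 ≤ lf0) (hlg1 : 0 ≤ lg1) (hlg2 : 0 ≤ lg2)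
    -- partial gradients of g_i
    (gxg : Fin N → Vec d1 → Vec d2 → Vec d1)
    (gyg : Fin N → Vec d1 → Vec d2 → Vec d2)
    -- partial gradients of f_i
    (gxf : Fin N → Vec d1 → Vec d2 → Vec d1)
    (gyf : Fin N → Vec d1 → Vec d2 → Vec d2)
    (hgyf : ∀ i x y, HasGradientAt (fun y' => f i x y') (gyf i x y) y)
    -- each g_i(x, ·) is μ_g-strongly convex in y (first-order characterization)
    (hsc : ∀ i x y1 y2, g i x y1 ≥ g i x y2 + ⟪gyg i x y2, y1 - y2⟫ + μg / 2 * ‖y1 - y2‖ ^ 2)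
    -- f_i is l_{f,0}-Lipschitz (ℓ2 norm on the joint variable)
    (hLf0 : ∀ i x1 y1 x2 y2, |f i x1 y1 - f i x2 y2|
      ≤ lf0 * Real.sqrt (‖x1 - x2‖ ^ 2 + ‖y1 - y2‖ ^ 2))
    -- ∇f_i is l_{f,1}-Lipschitz
    (hLf1 : ∀ i x1 y1 x2 y2,
      Real.sqrt (‖gxf i x1 y1 - gxf i x2 y2‖ ^ 2 + ‖gyf i x1 y1 - gyf i x2 y2‖ ^ 2)
        ≤ lf1 * Real.sqrt (‖x1 - x2‖ ^ 2 + ‖y1 - y2‖ ^ 2))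
    -- ∇g_i is l_{g,1}-Lipschitz
    (hLg1 : ∀ i x1 y1 x2 y2,
      Real.sqrt (‖gxg i x1 y1 - gxg i x2 y2‖ ^ 2 + ‖gyg i x1 y1 - gyg i x2 y2‖ ^ 2)
        ≤ lg1 * Real.sqrt (‖x1 - x2‖ ^ 2 + ‖y1 - y2‖ ^ 2))
    -- second derivative blocks of g_i and their l_{g,2}-Lipschitz continuity
    (Dxy : Fin N → Vec d1 → Vec d2 → (Vec d1 →L[ℝ] Vec d2))
    (Hyy : Fin N → Vec d1 → Vec d2 → (Vec d2 →L[ℝ] Vec d2))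
    (hDxy : ∀ i x y, HasFDerivAt (fun x' => gyg i x' y) (Dxy i x y) x)
    (hHyy : ∀ i x y, HasFDerivAt (fun y' => gyg i x y') (Hyy i x y) y)
    (hLg2xy : ∀ i x1 y1 x2 y2, ‖Dxy i x1 y1 - Dxy i x2 y2‖
      ≤ lg2 * Real.sqrt (‖x1 - x2‖ ^ 2 + ‖y1 - y2‖ ^ 2))
    (hLg2yy : ∀ i x1 y1 x2 y2, ‖Hyy i x1 y1 - Hyy i x2 y2‖
      ≤ lg2 * Real.sqrt (‖x1 - x2‖ ^ 2 + ‖y1 - y2‖ ^ 2))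
    -- inverse of ∇²_{yy} g_i (well defined since ∇²_{yy} g_i ⪰ μ_g I)
    (Hinv : Fin N → Vec d1 → Vec d2 → (Vec d2 →L[ℝ] Vec d2))
    (hHinv : ∀ i x y, (Hyy i x y).comp (Hinv i x y) = ContinuousLinearMap.id ℝ (Vec d2)
      ∧ (Hinv i x y).comp (Hyy i x y) = ContinuousLinearMap.id ℝ (Vec d2))
    -- the surrogate hypergradient of client i
    (barf : Fin N → Vec d1 → Vec d2 → Vec d1)
    (hbarf : ∀ i x y, barf i x y
      = gxf i x y - (ContinuousLinearMap.adjoint (Dxy i x y)) (Hinv i x y (gyf i x y)))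
    -- the constant M_f
    (Mf : ℝ) (hMf : Mf = lf1 + lg1 * lf1 / μg + lf0 / μg * (lg2 + lg1 * lg2 / μg))
    (ystar : Vec d1 → Vec d2) :
    ∀ (i : Fin N) (x : Vec d1) (y : Vec d2),
      ‖barf i x y - barf i x (ystar x)‖ ≤ Mf * ‖y - ystar x‖ := by
  intro i x y
  set z := ystar x
  have hgxf_sub : ‖gxf i x y - gxf i x z‖ ≤ lf1 * ‖y - z‖ :=
    (norm_le_sqrt_sq_add_sq_left _ _).trans (by simpa using hLf1 i x y x z)
  have hgyf_sub : ‖gyf i x y - gyf i x z‖ ≤ lf1 * ‖y - z‖ :=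
    (norm_le_sqrt_sq_add_sq_right _ _).trans (by simpa using hLf1 i x y x z)
  have hgyf_le : ‖gyf i x z‖ ≤ lf0 :=
    (hgyf i x z).norm_le_of_lip hlf0 fun y' => by simpa using hLf0 i x y' x z
  have hDxy_le : ‖Dxy i x y‖ ≤ lg1 :=
    (hDxy i x y).le_of_lip' hlg1 (.of_forall fun x' => (norm_le_sqrt_sq_add_sq_right _ _).trans
      (by simpa using hLg1 i x' y x y))
  have hDxy_sub : ‖Dxy i x y - Dxy i x z‖ ≤ lg2 * ‖y - z‖ := by
    simpa using hLg2xy i x y x z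
  have hHinv_le : ∀ y', ‖Hinv i x y'‖ ≤ μg⁻¹ := fun y' =>
    ContinuousLinearMap.norm_rightInverse_le_of_coercive hμg
      ((hHyy i x y').coercive_of_strongly_monotone (strongly_monotone_of_strongly_convex (hsc i x)))
      (hHinv i x y').1
  have hHyy_sub : ‖Hyy i x z - Hyy i x y‖ ≤ lg2 * ‖y - z‖ := by
    simpa [norm_sub_rev y z] using hLg2yy i x z x y
  have hHinv_sub : ‖Hinv i x y - Hinv i x z‖ ≤ μg⁻¹ * (lg2 * ‖y - z‖) * μg⁻¹ :=
    (norm_sub_le_of_mul_eq_one (hHinv i x y).2 (hHinv i x z).1).trans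
      (by gcongr <;> exact hHinv_le _)
  rw [hbarf, hbarf, hMf]
  refine (ContinuousLinearMap.norm_sub_apply_apply_sub_sub_apply_apply_le ..).trans ?_
  rw [← map_sub, LinearIsometryEquiv.norm_map, LinearIsometryEquiv.norm_map]
  calc
    _ ≤ lf1 * ‖y - z‖ + lg1 * μg⁻¹ * (lf1 * ‖y - z‖)
        + lg1 * (μg⁻¹ * (lg2 * ‖y - z‖) * μg⁻¹) * lf0 + lg2 * ‖y - z‖ * μg⁻¹ * lf0 := by
      gcongr <;> exact hHinv_le _
    _ = _ := by field_simp; ring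

theorem surrogate_hypergradient_lipschitz_in_y
    {d1 d2 N : ℕ} (hN : 0 < N)
    (f g : Fin N → Vec d1 → Vec d2 → ℝ)
    (μg lf0 lf1 lg1 lg2 : ℝ)
    (hμg : 0 < μg) (hlf0 : 0 ≤ lf0) (hlf1 : 0 ≤ lf1) (hlg1 : 0 ≤ lg1) (hlg2 : 0 ≤ lg2)
    -- twice continuous differentiability of upper- and lower-level objectives
    (hf2 : ∀ i, ContDiff ℝ 2 (fun p : Vec d1 × Vec d2 => f i p.1 p.2))
    (hg2 : ∀ i, ContDiff ℝ 2 (fun p : Vec d1 × Vec d2 => g i p.1 p.2))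
    -- partial gradients of g_i
    (gxg : Fin N → Vec d1 → Vec d2 → Vec d1)
    (gyg : Fin N → Vec d1 → Vec d2 → Vec d2)
    (hgxg : ∀ i x y, HasGradientAt (fun x' => g i x' y) (gxg i x y) x)
    (hgyg : ∀ i x y, HasGradientAt (fun y' => g i x y') (gyg i x y) y)
    -- partial gradients of f_i
    (gxf : Fin N → Vec d1 → Vec d2 → Vec d1)
    (gyf : Fin N → Vec d1 → Vec d2 → Vec d2)
    (hgxf : ∀ i x y, HasGradientAt (fun x' => f i x' y) (gxf i x y) x)
    (hgyf : ∀ i x y, HasGradientAt (fun y' => f i x y') (gyf i x y) y)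
    -- each g_i(x, ·) is μ_g-strongly convex in y (first-order characterization)
    (hsc : ∀ i x y1 y2, g i x y1 ≥ g i x y2 + ⟪gyg i x y2, y1 - y2⟫ + μg / 2 * ‖y1 - y2‖ ^ 2)
    -- f_i is l_{f,0}-Lipschitz (ℓ2 norm on the joint variable)
    (hLf0 : ∀ i x1 y1 x2 y2, |f i x1 y1 - f i x2 y2|
      ≤ lf0 * Real.sqrt (‖x1 - x2‖ ^ 2 + ‖y1 - y2‖ ^ 2))
    -- ∇f_i is l_{f,1}-Lipschitz
    (hLf1 : ∀ i x1 y1 x2 y2,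
      Real.sqrt (‖gxf i x1 y1 - gxf i x2 y2‖ ^ 2 + ‖gyf i x1 y1 - gyf i x2 y2‖ ^ 2)
        ≤ lf1 * Real.sqrt (‖x1 - x2‖ ^ 2 + ‖y1 - y2‖ ^ 2))
    -- ∇g_i is l_{g,1}-Lipschitz
    (hLg1 : ∀ i x1 y1 x2 y2,
      Real.sqrt (‖gxg i x1 y1 - gxg i x2 y2‖ ^ 2 + ‖gyg i x1 y1 - gyg i x2 y2‖ ^ 2)
        ≤ lg1 * Real.sqrt (‖x1 - x2‖ ^ 2 + ‖y1 - y2‖ ^ 2))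
    -- second derivative blocks of g_i and their l_{g,2}-Lipschitz continuity
    (Dxy : Fin N → Vec d1 → Vec d2 → (Vec d1 →L[ℝ] Vec d2))
    (Hyy : Fin N → Vec d1 → Vec d2 → (Vec d2 →L[ℝ] Vec d2))
    (hDxy : ∀ i x y, HasFDerivAt (fun x' => gyg i x' y) (Dxy i x y) x)
    (hHyy : ∀ i x y, HasFDerivAt (fun y' => gyg i x y') (Hyy i x y) y)
    (hLg2xy : ∀ i x1 y1 x2 y2, ‖Dxy i x1 y1 - Dxy i x2 y2‖
      ≤ lg2 * Real.sqrt (‖x1 - x2‖ ^ 2 + ‖y1 - y2‖ ^ 2))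
    (hLg2yy : ∀ i x1 y1 x2 y2, ‖Hyy i x1 y1 - Hyy i x2 y2‖
      ≤ lg2 * Real.sqrt (‖x1 - x2‖ ^ 2 + ‖y1 - y2‖ ^ 2))
    -- inverse of ∇²_{yy} g_i (well defined since ∇²_{yy} g_i ⪰ μ_g I)
    (Hinv : Fin N → Vec d1 → Vec d2 → (Vec d2 →L[ℝ] Vec d2))
    (hHinv : ∀ i x y, (Hyy i x y).comp (Hinv i x y) = ContinuousLinearMap.id ℝ (Vec d2)
      ∧ (Hinv i x y).comp (Hyy i x y) = ContinuousLinearMap.id ℝ (Vec d2))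
    -- the surrogate hypergradient of client i
    (barf : Fin N → Vec d1 → Vec d2 → Vec d1)
    (hbarf : ∀ i x y, barf i x y
      = gxf i x y - (ContinuousLinearMap.adjoint (Dxy i x y)) (Hinv i x y (gyf i x y)))
    -- the constant M_f
    (Mf : ℝ) (hMf : Mf = lf1 + lg1 * lf1 / μg + lf0 / μg * (lg2 + lg1 * lg2 / μg))
    -- y*(x) minimizes the average lower-level objective
    (ystar : Vec d1 → Vec d2)
    (hystar : ∀ x y, (N : ℝ)⁻¹ * ∑ i, g i x (ystar x) ≤ (N : ℝ)⁻¹ * ∑ i, g i x y) :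
    ∀ (i : Fin N) (x : Vec d1) (y : Vec d2),
      ‖barf i x y - barf i x (ystar x)‖ ≤ Mf * ‖y - ystar x‖ :=
  surrogate_hypergradient_lipschitz_in_y_general f g μg lf0 lf1 lg1 lg2 hμg hlf0 hlg1 hlg2 gxg gyg
    gxf gyf hgyf hsc hLf0 hLf1 hLg1 Dxy Hyy hDxy hHyy hLg2xy hLg2yy Hinv hHinv barf hbarf Mf hMf
    ystar
end
end

section
/- For every client i, every y ∈ ℝ^{d2} and all x1, x2 ∈ ℝ^{d1}, the surrogate hypergradient is M_f-Lipschitz in its first argument: ‖∇̄f_i(x1, y) − ∇̄f_i(x2, y)‖ ≤ M_f ‖x1 − x2‖. -/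
open scoped RealInnerProductSpace

noncomputable section

/-! Write `∇̄f_i = ∇ₓf_i - Dᵀ H⁻¹ v` with `D = ∇²_{xy} g_i`, `H = ∇²_{yy} g_i`, `v = ∇_y f_i`.
Strong convexity makes `∇_y g_i(x, ·)` strongly monotone, so `H ⪰ μ_g I` and `‖H⁻¹‖ ≤ 1/μ_g`,
while the Lipschitz bounds give `‖v‖ ≤ l_{f,0}` and `‖D‖ ≤ l_{g,1}`. Perturbing the triple product
`Dᵀ H⁻¹ v` one factor at a time, with the resolvent identity
`H₁⁻¹ - H₂⁻¹ = H₁⁻¹ (H₂ - H₁) H₂⁻¹` for the middle factor, yields the three terms of `M_f`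
besides `l_{f,1}`. -/

lemma le_of_sqrt_sq_add_sq_le_left {a b c : ℝ} (ha : 0 ≤ a) (h : √(a ^ 2 + b ^ 2) ≤ c) :
    a ≤ c :=
  ((Real.le_sqrt ha (by positivity)).2 (le_add_of_nonneg_right (sq_nonneg b))).trans h

lemma le_of_sqrt_sq_add_sq_le_right {a b c : ℝ} (hb : 0 ≤ b) (h : √(a ^ 2 + b ^ 2) ≤ c) :
    b ≤ c :=
  le_of_sqrt_sq_add_sq_le_left hb (by rwa [add_comm])

namespace ContinuousLinearMap

variable {𝕜 E F G : Type*} [NontriviallyNormedField 𝕜]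
  [NormedAddCommGroup E] [NormedSpace 𝕜 E] [NormedAddCommGroup F] [NormedSpace 𝕜 F]
  [NormedAddCommGroup G] [NormedSpace 𝕜 G]

lemma norm_apply_apply_sub_apply_apply_le (A₁ A₂ : F →L[𝕜] G) (B₁ B₂ : E →L[𝕜] F) (v₁ v₂ : E) :
    ‖A₁ (B₁ v₁) - A₂ (B₂ v₂)‖
      ≤ ‖A₁ - A₂‖ * ‖B₁‖ * ‖v₁‖ + ‖A₂‖ * ‖B₁ - B₂‖ * ‖v₁‖ + ‖A₂‖ * ‖B₂‖ * ‖v₁ - v₂‖ := by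
  have hsplit : A₁ (B₁ v₁) - A₂ (B₂ v₂)
      = (A₁ - A₂) (B₁ v₁) + A₂ ((B₁ - B₂) v₁) + A₂ (B₂ (v₁ - v₂)) := by
    simp only [sub_apply, map_sub]
    abel
  rw [hsplit]
  refine norm_add₃_le.trans (add_le_add_three ?_ ?_ ?_) <;>
    refine (le_opNorm _ _).trans ?_ <;> rw [mul_assoc] <;> gcongr <;> exact le_opNorm _ _

lemma norm_sub_le_of_comp_eq_id {A B : E →L[𝕜] F} {A' B' : F →L[𝕜] E}
    (hA : A'.comp A = ContinuousLinearMap.id 𝕜 E) (hB : B.comp B' = ContinuousLinearMap.id 𝕜 F) :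
    ‖A' - B'‖ ≤ ‖A'‖ * ‖B - A‖ * ‖B'‖ := by
  have hresolvent : A' - B' = (A'.comp (B - A)).comp B' := by
    ext w
    have hAw := congr($hA (B' w))
    have hBw := congr($hB w)
    simp only [comp_apply, id_apply] at hAw hBw
    simp only [comp_apply, sub_apply, map_sub, hAw, hBw]
  rw [hresolvent]
  exact (opNorm_comp_le _ _).trans (by gcongr; exact opNorm_comp_le _ _)

end ContinuousLinearMap

section InnerProduct

variable {E : Type*} [NormedAddCommGroup E] [InnerProductSpace ℝ E]

def IsStronglyMonotone (μ : ℝ) (G : E → E) : Prop :=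
  ∀ y₁ y₂, μ * ‖y₁ - y₂‖ ^ 2 ≤ ⟪G y₁ - G y₂, y₁ - y₂⟫

/-- Add the strong convexity inequality to itself with the roles of `y₁` and `y₂` swapped. -/
lemma isStronglyMonotone_of_strongConvex {φ : E → ℝ} {G : E → E} {μ : ℝ}
    (h : ∀ y₁ y₂, φ y₁ ≥ φ y₂ + ⟪G y₂, y₁ - y₂⟫ + μ / 2 * ‖y₁ - y₂‖ ^ 2) :
    IsStronglyMonotone μ G := by
  intro y₁ y₂
  have h₁₂ := h y₁ y₂
  have h₂₁ := h y₂ y₁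
  rw [← neg_sub y₁ y₂, inner_neg_right, norm_neg] at h₂₁
  rw [inner_sub_left]
  linarith

lemma IsStronglyMonotone.le_inner_fderiv {μ : ℝ} {G : E → E} (hG : IsStronglyMonotone μ G)
    {H : E →L[ℝ] E} {y : E} (hH : HasFDerivAt G H y) (v : E) :
    μ * ‖v‖ ^ 2 ≤ ⟪H v, v⟫ := by
  -- `⟪t⁻¹ • (G (y + t • v) - G y), v⟫ ≥ μ ‖v‖²` for `t > 0`; let `t → 0⁺`.
  have hlim := (hH.hasLineDerivAt v).tendsto_slope_zero_right.inner (𝕜 := ℝ)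
    (tendsto_const_nhds (x := v))
  refine ge_of_tendsto hlim (eventually_nhdsWithin_of_forall fun t (ht : 0 < t) => ?_)
  have hmono := hG (y + t • v) y
  rw [add_sub_cancel_left, norm_smul, real_inner_smul_right, Real.norm_eq_abs, abs_of_pos ht]
    at hmono
  rw [real_inner_smul_left, le_inv_mul_iff₀ ht]
  nlinarith

lemma mul_norm_le_norm_apply_of_le_inner {μ : ℝ} {H : E →L[ℝ] E}
    (hH : ∀ v, μ * ‖v‖ ^ 2 ≤ ⟪H v, v⟫) (v : E) : μ * ‖v‖ ≤ ‖H v‖ := by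
  rcases (norm_nonneg v).eq_or_lt with hv | hv
  · rw [← hv, mul_zero]
    exact norm_nonneg _
  · refine le_of_mul_le_mul_right ?_ hv
    calc μ * ‖v‖ * ‖v‖ = μ * ‖v‖ ^ 2 := by ring
      _ ≤ ⟪H v, v⟫ := hH v
      _ ≤ ‖H v‖ * ‖v‖ := real_inner_le_norm _ _

lemma opNorm_le_inv_of_le_inner {μ : ℝ} (hμ : 0 < μ) {H H' : E →L[ℝ] E}
    (hH : ∀ v, μ * ‖v‖ ^ 2 ≤ ⟪H v, v⟫) (hH' : H.comp H' = ContinuousLinearMap.id ℝ E) :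
    ‖H'‖ ≤ μ⁻¹ := by
  refine H'.opNorm_le_bound (inv_nonneg.2 hμ.le) fun w => ?_
  rw [inv_mul_eq_div, le_div_iff₀' hμ]
  simpa [← ContinuousLinearMap.comp_apply, hH'] using mul_norm_le_norm_apply_of_le_inner hH (H' w)

lemma HasGradientAt.norm_le_of_lip_s3 [CompleteSpace E] {φ : E → ℝ} {g y : E} {C : ℝ}
    (h : HasGradientAt φ g y) (hC : 0 ≤ C) (hlip : ∀ y', |φ y' - φ y| ≤ C * ‖y' - y‖) :
    ‖g‖ ≤ C := by
  have hfderiv := h.hasFDerivAt.le_of_lip' hC (.of_forall hlip)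
  rwa [LinearIsometryEquiv.norm_map] at hfderiv

end InnerProduct

theorem surrogate_hypergradient_lipschitz_in_x_general
    {d1 d2 N : ℕ}
    (f g : Fin N → Vec d1 → Vec d2 → ℝ)
    (μg lf0 lf1 lg1 lg2 : ℝ)
    (hμg : 0 < μg) (hlf0 : 0 ≤ lf0) (hlg1 : 0 ≤ lg1) (hlg2 : 0 ≤ lg2)
    -- partial gradients of g_i
    (gxg : Fin N → Vec d1 → Vec d2 → Vec d1)
    (gyg : Fin N → Vec d1 → Vec d2 → Vec d2)
    -- partial gradients of f_i
    (gxf : Fin N → Vec d1 → Vec d2 → Vec d1)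
    (gyf : Fin N → Vec d1 → Vec d2 → Vec d2)
    (hgyf : ∀ i x y, HasGradientAt (fun y' => f i x y') (gyf i x y) y)
    -- each g_i(x, ·) is μ_g-strongly convex in y (first-order characterization)
    (hsc : ∀ i x y1 y2, g i x y1 ≥ g i x y2 + ⟪gyg i x y2, y1 - y2⟫ + μg / 2 * ‖y1 - y2‖ ^ 2)
    -- f_i is l_{f,0}-Lipschitz (ℓ2 norm on the joint variable)
    (hLf0 : ∀ i x1 y1 x2 y2, |f i x1 y1 - f i x2 y2|
      ≤ lf0 * Real.sqrt (‖x1 - x2‖ ^ 2 + ‖y1 - y2‖ ^ 2))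
    -- ∇f_i is l_{f,1}-Lipschitz
    (hLf1 : ∀ i x1 y1 x2 y2,
      Real.sqrt (‖gxf i x1 y1 - gxf i x2 y2‖ ^ 2 + ‖gyf i x1 y1 - gyf i x2 y2‖ ^ 2)
        ≤ lf1 * Real.sqrt (‖x1 - x2‖ ^ 2 + ‖y1 - y2‖ ^ 2))
    -- ∇g_i is l_{g,1}-Lipschitz
    (hLg1 : ∀ i x1 y1 x2 y2,
      Real.sqrt (‖gxg i x1 y1 - gxg i x2 y2‖ ^ 2 + ‖gyg i x1 y1 - gyg i x2 y2‖ ^ 2)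
        ≤ lg1 * Real.sqrt (‖x1 - x2‖ ^ 2 + ‖y1 - y2‖ ^ 2))
    -- second derivative blocks of g_i and their l_{g,2}-Lipschitz continuity
    (Dxy : Fin N → Vec d1 → Vec d2 → (Vec d1 →L[ℝ] Vec d2))
    (Hyy : Fin N → Vec d1 → Vec d2 → (Vec d2 →L[ℝ] Vec d2))
    (hDxy : ∀ i x y, HasFDerivAt (fun x' => gyg i x' y) (Dxy i x y) x)
    (hHyy : ∀ i x y, HasFDerivAt (fun y' => gyg i x y') (Hyy i x y) y)
    (hLg2xy : ∀ i x1 y1 x2 y2, ‖Dxy i x1 y1 - Dxy i x2 y2‖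
      ≤ lg2 * Real.sqrt (‖x1 - x2‖ ^ 2 + ‖y1 - y2‖ ^ 2))
    (hLg2yy : ∀ i x1 y1 x2 y2, ‖Hyy i x1 y1 - Hyy i x2 y2‖
      ≤ lg2 * Real.sqrt (‖x1 - x2‖ ^ 2 + ‖y1 - y2‖ ^ 2))
    -- inverse of ∇²_{yy} g_i (well defined since ∇²_{yy} g_i ⪰ μ_g I)
    (Hinv : Fin N → Vec d1 → Vec d2 → (Vec d2 →L[ℝ] Vec d2))
    (hHinv : ∀ i x y, (Hyy i x y).comp (Hinv i x y) = ContinuousLinearMap.id ℝ (Vec d2)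
      ∧ (Hinv i x y).comp (Hyy i x y) = ContinuousLinearMap.id ℝ (Vec d2))
    -- the surrogate hypergradient of client i
    (barf : Fin N → Vec d1 → Vec d2 → Vec d1)
    (hbarf : ∀ i x y, barf i x y
      = gxf i x y - (ContinuousLinearMap.adjoint (Dxy i x y)) (Hinv i x y (gyf i x y)))
    -- the constant M_f
    (Mf : ℝ) (hMf : Mf = lf1 + lg1 * lf1 / μg + lf0 / μg * (lg2 + lg1 * lg2 / μg))
    : ∀ (i : Fin N) (y : Vec d2) (x1 x2 : Vec d1),
      ‖barf i x1 y - barf i x2 y‖ ≤ Mf * ‖x1 - x2‖ := by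
  intro i y x1 x2
  have hinv_le : ∀ x, ‖Hinv i x y‖ ≤ μg⁻¹ := fun x =>
    opNorm_le_inv_of_le_inner hμg
      ((isStronglyMonotone_of_strongConvex (hsc i x)).le_inner_fderiv (hHyy i x y))
      (hHinv i x y).1
  have hinv₁_le := hinv_le x1
  have hinv₂_le := hinv_le x2
  have hgyf_le : ‖gyf i x1 y‖ ≤ lf0 :=
    (hgyf i x1 y).norm_le_of_lip_s3 hlf0 fun y' => by simpa using hLf0 i x1 y' x1 y
  have hDxy_le : ‖Dxy i x2 y‖ ≤ lg1 := (hDxy i x2 y).le_of_lip' hlg1 (.of_forall fun x =>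
    le_of_sqrt_sq_add_sq_le_right (norm_nonneg _) (by simpa using hLg1 i x y x2 y))
  have hgxf_sub : ‖gxf i x1 y - gxf i x2 y‖ ≤ lf1 * ‖x1 - x2‖ :=
    le_of_sqrt_sq_add_sq_le_left (norm_nonneg _) (by simpa using hLf1 i x1 y x2 y)
  have hgyf_sub : ‖gyf i x1 y - gyf i x2 y‖ ≤ lf1 * ‖x1 - x2‖ :=
    le_of_sqrt_sq_add_sq_le_right (norm_nonneg _) (by simpa using hLf1 i x1 y x2 y)
  have hDxy_sub : ‖Dxy i x1 y - Dxy i x2 y‖ ≤ lg2 * ‖x1 - x2‖ := by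
    simpa using hLg2xy i x1 y x2 y
  have hHyy_sub : ‖Hyy i x2 y - Hyy i x1 y‖ ≤ lg2 * ‖x1 - x2‖ := by
    simpa [norm_sub_rev x2 x1] using hLg2yy i x2 y x1 y
  have hinv_sub : ‖Hinv i x1 y - Hinv i x2 y‖ ≤ μg⁻¹ * (lg2 * ‖x1 - x2‖) * μg⁻¹ :=
    (ContinuousLinearMap.norm_sub_le_of_comp_eq_id (hHinv i x1 y).2 (hHinv i x2 y).1).trans
      (by gcongr)
  open ContinuousLinearMap in
  calc ‖barf i x1 y - barf i x2 y‖
      ≤ ‖gxf i x1 y - gxf i x2 y‖ + ‖adjoint (Dxy i x1 y) (Hinv i x1 y (gyf i x1 y))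
          - adjoint (Dxy i x2 y) (Hinv i x2 y (gyf i x2 y))‖ := by
        rw [hbarf, hbarf, sub_sub_sub_comm]
        exact norm_sub_le _ _
    _ ≤ lf1 * ‖x1 - x2‖ + (lg2 * ‖x1 - x2‖ * μg⁻¹ * lf0
          + lg1 * (μg⁻¹ * (lg2 * ‖x1 - x2‖) * μg⁻¹) * lf0 + lg1 * μg⁻¹ * (lf1 * ‖x1 - x2‖)) := by
        gcongr
        refine (norm_apply_apply_sub_apply_apply_le _ _ _ _ _ _).trans ?_
        rw [← map_sub, LinearIsometryEquiv.norm_map, LinearIsometryEquiv.norm_map]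
        gcongr
    _ = Mf * ‖x1 - x2‖ := by
        rw [hMf]
        field_simp
        ring

theorem surrogate_hypergradient_lipschitz_in_x
    {d1 d2 N : ℕ} (hN : 0 < N)
    (f g : Fin N → Vec d1 → Vec d2 → ℝ)
    (μg lf0 lf1 lg1 lg2 : ℝ)
    (hμg : 0 < μg) (hlf0 : 0 ≤ lf0) (hlf1 : 0 ≤ lf1) (hlg1 : 0 ≤ lg1) (hlg2 : 0 ≤ lg2)
    -- twice continuous differentiability of upper- and lower-level objectives
    (hf2 : ∀ i, ContDiff ℝ 2 (fun p : Vec d1 × Vec d2 => f i p.1 p.2))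
    (hg2 : ∀ i, ContDiff ℝ 2 (fun p : Vec d1 × Vec d2 => g i p.1 p.2))
    -- partial gradients of g_i
    (gxg : Fin N → Vec d1 → Vec d2 → Vec d1)
    (gyg : Fin N → Vec d1 → Vec d2 → Vec d2)
    (hgxg : ∀ i x y, HasGradientAt (fun x' => g i x' y) (gxg i x y) x)
    (hgyg : ∀ i x y, HasGradientAt (fun y' => g i x y') (gyg i x y) y)
    -- partial gradients of f_i
    (gxf : Fin N → Vec d1 → Vec d2 → Vec d1)
    (gyf : Fin N → Vec d1 → Vec d2 → Vec d2)
    (hgxf : ∀ i x y, HasGradientAt (fun x' => f i x' y) (gxf i x y) x)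
    (hgyf : ∀ i x y, HasGradientAt (fun y' => f i x y') (gyf i x y) y)
    -- each g_i(x, ·) is μ_g-strongly convex in y (first-order characterization)
    (hsc : ∀ i x y1 y2, g i x y1 ≥ g i x y2 + ⟪gyg i x y2, y1 - y2⟫ + μg / 2 * ‖y1 - y2‖ ^ 2)
    -- f_i is l_{f,0}-Lipschitz (ℓ2 norm on the joint variable)
    (hLf0 : ∀ i x1 y1 x2 y2, |f i x1 y1 - f i x2 y2|
      ≤ lf0 * Real.sqrt (‖x1 - x2‖ ^ 2 + ‖y1 - y2‖ ^ 2))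
    -- ∇f_i is l_{f,1}-Lipschitz
    (hLf1 : ∀ i x1 y1 x2 y2,
      Real.sqrt (‖gxf i x1 y1 - gxf i x2 y2‖ ^ 2 + ‖gyf i x1 y1 - gyf i x2 y2‖ ^ 2)
        ≤ lf1 * Real.sqrt (‖x1 - x2‖ ^ 2 + ‖y1 - y2‖ ^ 2))
    -- ∇g_i is l_{g,1}-Lipschitz
    (hLg1 : ∀ i x1 y1 x2 y2,
      Real.sqrt (‖gxg i x1 y1 - gxg i x2 y2‖ ^ 2 + ‖gyg i x1 y1 - gyg i x2 y2‖ ^ 2)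
        ≤ lg1 * Real.sqrt (‖x1 - x2‖ ^ 2 + ‖y1 - y2‖ ^ 2))
    -- second derivative blocks of g_i and their l_{g,2}-Lipschitz continuity
    (Dxy : Fin N → Vec d1 → Vec d2 → (Vec d1 →L[ℝ] Vec d2))
    (Hyy : Fin N → Vec d1 → Vec d2 → (Vec d2 →L[ℝ] Vec d2))
    (hDxy : ∀ i x y, HasFDerivAt (fun x' => gyg i x' y) (Dxy i x y) x)
    (hHyy : ∀ i x y, HasFDerivAt (fun y' => gyg i x y') (Hyy i x y) y)
    (hLg2xy : ∀ i x1 y1 x2 y2, ‖Dxy i x1 y1 - Dxy i x2 y2‖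
      ≤ lg2 * Real.sqrt (‖x1 - x2‖ ^ 2 + ‖y1 - y2‖ ^ 2))
    (hLg2yy : ∀ i x1 y1 x2 y2, ‖Hyy i x1 y1 - Hyy i x2 y2‖
      ≤ lg2 * Real.sqrt (‖x1 - x2‖ ^ 2 + ‖y1 - y2‖ ^ 2))
    -- inverse of ∇²_{yy} g_i (well defined since ∇²_{yy} g_i ⪰ μ_g I)
    (Hinv : Fin N → Vec d1 → Vec d2 → (Vec d2 →L[ℝ] Vec d2))
    (hHinv : ∀ i x y, (Hyy i x y).comp (Hinv i x y) = ContinuousLinearMap.id ℝ (Vec d2)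
      ∧ (Hinv i x y).comp (Hyy i x y) = ContinuousLinearMap.id ℝ (Vec d2))
    -- the surrogate hypergradient of client i
    (barf : Fin N → Vec d1 → Vec d2 → Vec d1)
    (hbarf : ∀ i x y, barf i x y
      = gxf i x y - (ContinuousLinearMap.adjoint (Dxy i x y)) (Hinv i x y (gyf i x y)))
    -- the constant M_f
    (Mf : ℝ) (hMf : Mf = lf1 + lg1 * lf1 / μg + lf0 / μg * (lg2 + lg1 * lg2 / μg))
    : ∀ (i : Fin N) (y : Vec d2) (x1 x2 : Vec d1),
      ‖barf i x1 y - barf i x2 y‖ ≤ Mf * ‖x1 - x2‖ :=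
  surrogate_hypergradient_lipschitz_in_x_general f g μg lf0 lf1 lg1 lg2 hμg hlf0 hlg1 hlg2 gxg gyg
    gxf gyf hgyf hsc hLf0 hLf1 hLg1 Dxy Hyy hDxy hHyy hLg2xy hLg2yy Hinv hHinv barf hbarf Mf hMf

end
end
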